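/- arXiv:1501.02605 — 2 statements merged into one kernel-verified Lean document; each statement's English description precedes it below -/
import Mathlib

section
/- For every x ∈ (0,1) and y ∈ (−1,1), the double generating function Q(x,y) = ∑_{j=0}^{∞} y^j · f_j(x) converges and equals B(x, 1−y, 1+y) / (x^{1−y} · (1−x)^{1+y}), where B(x,a,b) = ∫_0^x t^{a−1}(1−t)^{b−1} dt is the incomplete beta function. -/
/-!
Summing over `k` first, `P_n(y) = ∑_k y^k H_n^{(k)}` satisfies
`(n + 1 - y) P_{n+1} = (n + 1) P_n`, because
`H_{n+1}^{(k+1)} = H_n^{(k+1)} + H_{n+1}^{(k)} / (n + 1)`; the bound `H_n^{(k)} ≤ n` makes the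
double series absolutely convergent, so `Q(t) = ∑_n P_{n+1}(y) t^n`. The recurrence turns into
the differential equation `t (1 - t) Q' + (1 - y - 2t) Q = 1`, that is
`(t^{1-y} (1-t)^{1+y} Q(t))' = t^{-y} (1-t)^y`, and integrating from `0` to `x` gives the formula.
-/

/-- The generalized harmonic numbers: `genH k n = H_n^{(k)}`, defined by `H_n^{(0)} = 1`
and `H_n^{(k)} = ∑_{j=1}^{n} H_j^{(k−1)}/j` for `k ≥ 1`. -/
noncomputable def genH : ℕ → ℕ → ℝ
  | 0, _ => 1
  | (k+1), n => ∑ j ∈ Finset.Icc 1 n, genH k j / (j : ℝ)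

open Filter Asymptotics

theorem summable_succ_pow_mul_geometric (k : ℕ) {r : ℝ} (hr : |r| < 1) :
    Summable (fun n : ℕ => ((n : ℝ) + 1) ^ k * r ^ n) := by
  have hsucc : (fun n : ℕ => (n : ℝ) + 1) =O[atTop] (fun n => (n : ℝ)) := by
    refine IsBigO.of_bound 2 ?_
    filter_upwards [eventually_ge_atTop 1] with n hn
    have : (1 : ℝ) ≤ n := by exact_mod_cast hn
    rw [Real.norm_of_nonneg (by positivity), Real.norm_of_nonneg (by positivity)]
    linarith
  refine Summable.of_norm ?_
  simpa using summable_norm_mul_geometric_of_norm_lt_one (R := ℝ) (k := k)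
    (u := fun n => (n + 1) ^ k) hr (by push_cast; exact hsucc.pow k)

section PowerSeries

variable {a : ℕ → ℝ} {C : ℝ} {k : ℕ}

theorem summable_mul_pow_of_abs_le (ha : ∀ n, |a n| ≤ C * ((n : ℝ) + 1) ^ k) {t : ℝ}
    (ht : |t| < 1) : Summable (fun n => a n * t ^ n) := by
  have hmaj := (summable_succ_pow_mul_geometric k (r := |t|) (by rwa [abs_abs])).mul_left C
  refine .of_norm_bounded hmaj fun n => ?_
  rw [norm_mul, norm_pow, Real.norm_eq_abs, Real.norm_eq_abs, ← mul_assoc]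
  exact mul_le_mul_of_nonneg_right (ha n) (by positivity)

theorem hasDerivAt_tsum_mul_pow (ha : ∀ n, |a n| ≤ C * ((n : ℝ) + 1) ^ k) {t : ℝ}
    (ht : |t| < 1) :
    HasDerivAt (fun u => ∑' n, a n * u ^ n) (∑' n, a n * (n * t ^ (n - 1))) t := by
  obtain ⟨r, htr, hr1⟩ := exists_between ht
  have hr0 : 0 < r := (abs_nonneg t).trans_lt htr
  have hC : 0 ≤ C := by simpa using (abs_nonneg _).trans (ha 0)
  have hbound : ∀ n (u : ℝ), u ∈ Metric.ball 0 r →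
      ‖a n * (n * u ^ (n - 1))‖ ≤ C / r * (((n : ℝ) + 1) ^ (k + 1) * r ^ n) := by
    intro n u hu
    rw [mem_ball_zero_iff, Real.norm_eq_abs] at hu
    rcases n with _ | m
    · simp only [CharP.cast_eq_zero, zero_mul, mul_zero, norm_zero]
      positivity
    · rw [Nat.add_sub_cancel, norm_mul, norm_mul, norm_pow, Real.norm_eq_abs, Real.norm_eq_abs,
        Real.norm_eq_abs, Nat.abs_cast]
      calc |a (m + 1)| * (((m + 1 : ℕ) : ℝ) * |u| ^ m)
          ≤ C * (((m + 1 : ℕ) : ℝ) + 1) ^ k * ((((m + 1 : ℕ) : ℝ) + 1) * r ^ m) := by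
            gcongr
            · exact ha _
            · linarith
        _ = C / r * ((((m + 1 : ℕ) : ℝ) + 1) ^ (k + 1) * r ^ (m + 1)) := by
            field_simp
            ring
  exact hasDerivAt_tsum_of_isPreconnected
    ((summable_succ_pow_mul_geometric (k + 1) (by rwa [abs_of_pos hr0])).mul_left _)
    Metric.isOpen_ball (convex_ball 0 r).isPreconnected
    (fun n u _ => (hasDerivAt_pow n u).const_mul (a n)) hbound (Metric.mem_ball_self hr0)
    (summable_mul_pow_of_abs_le ha (by simp)) (by rwa [mem_ball_zero_iff, Real.norm_eq_abs])

end PowerSeries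

theorem genH_nonneg : ∀ k n : ℕ, 0 ≤ genH k n
  | 0, _ => zero_le_one
  | k + 1, _ => Finset.sum_nonneg fun j _ => div_nonneg (genH_nonneg k j) j.cast_nonneg

theorem genH_le_self (k : ℕ) {n : ℕ} (hn : 1 ≤ n) : genH k n ≤ n := by
  induction k generalizing n with
  | zero => show (1 : ℝ) ≤ n; exact_mod_cast hn
  | succ k ih =>
    calc genH (k + 1) n = ∑ j ∈ Finset.Icc 1 n, genH k j / (j : ℝ) := rfl
      _ ≤ ∑ _j ∈ Finset.Icc 1 n, (1 : ℝ) := Finset.sum_le_sum fun j hj => by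
          have hj1 := (Finset.mem_Icc.mp hj).1
          exact div_le_one_of_le₀ (ih hj1) j.cast_nonneg
      _ = n := by simp

theorem genH_le_succ (k n : ℕ) : genH k n ≤ n + 1 := by
  rcases n with _ | n
  · cases k <;> simp [genH]
  · have := genH_le_self k (Nat.succ_pos n)
    push_cast at this ⊢
    linarith

theorem genH_zero_right (k : ℕ) : genH k 0 = if k = 0 then 1 else 0 := by
  cases k <;> simp [genH]

theorem genH_succ_succ (k n : ℕ) :
    genH (k + 1) (n + 1) = genH (k + 1) n + genH k (n + 1) / ((n : ℝ) + 1) := by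
  rw [genH, genH, Finset.sum_Icc_succ_top (by omega)]
  push_cast
  rfl

noncomputable def genHSum (y : ℝ) (n : ℕ) : ℝ := ∑' k, y ^ k * genH k n

section GenHSum

variable {y : ℝ}

theorem summable_pow_mul_genH (hy : |y| < 1) (n : ℕ) :
    Summable (fun k => y ^ k * genH k n) := by
  have hmaj := (summable_geometric_of_lt_one (abs_nonneg y) hy).mul_right ((n : ℝ) + 1)
  refine .of_norm_bounded hmaj fun k => ?_
  rw [norm_mul, norm_pow, Real.norm_eq_abs, Real.norm_of_nonneg (genH_nonneg k n)]
  exact mul_le_mul_of_nonneg_left (genH_le_succ k n) (by positivity)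

theorem genHSum_zero (y : ℝ) : genHSum y 0 = 1 := by
  simp [genHSum, genH_zero_right]

theorem genHSum_succ (hy : |y| < 1) (n : ℕ) :
    ((n : ℝ) + 1 - y) * genHSum y (n + 1) = (n + 1) * genHSum y n := by
  have hs₁ := summable_pow_mul_genH hy (n + 1)
  have hs₀ := summable_pow_mul_genH hy n
  have hdiff : genHSum y (n + 1) - genHSum y n = y / (n + 1) * genHSum y (n + 1) := by
    rw [genHSum, genHSum, ← hs₁.tsum_sub hs₀, (hs₁.sub hs₀).tsum_eq_zero_add,
      ← tsum_mul_left]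
    simp only [pow_zero, genH.eq_1, sub_self, zero_add]
    refine tsum_congr fun k => ?_
    rw [genH_succ_succ]
    field_simp
    ring
  field_simp at hdiff
  linear_combination hdiff

theorem abs_genHSum_le (hy : |y| < 1) {n : ℕ} (hn : 1 ≤ n) :
    |genHSum y n| ≤ (1 - |y|)⁻¹ * n := by
  refine tsum_of_norm_bounded (f := fun k => y ^ k * genH k n)
    ((hasSum_geometric_of_lt_one (abs_nonneg y) hy).mul_right (n : ℝ)) fun k => ?_
  rw [norm_mul, norm_pow, Real.norm_eq_abs, Real.norm_of_nonneg (genH_nonneg k n)]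
  exact mul_le_mul_of_nonneg_left (genH_le_self k hn) (by positivity)

end GenHSum

-- `Q(x, y)` with the two summations exchanged
noncomputable def doubleGF (x y : ℝ) : ℝ := ∑' n, genHSum y (n + 1) * x ^ n

section DoubleGF

variable {x y t : ℝ}

theorem abs_genHSum_succ_le (hy : |y| < 1) (n : ℕ) :
    |genHSum y (n + 1)| ≤ (1 - |y|)⁻¹ * ((n : ℝ) + 1) ^ 1 := by
  simpa using abs_genHSum_le hy (Nat.le_add_left 1 n)

theorem hasDerivAt_doubleGF (hy : |y| < 1) (ht : |t| < 1) :
    HasDerivAt (doubleGF · y) (∑' n, genHSum y (n + 1) * (n * t ^ (n - 1))) t :=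
  hasDerivAt_tsum_mul_pow (abs_genHSum_succ_le hy) ht

theorem doubleGF_ode (hy : |y| < 1) (ht : |t| < 1) :
    t * (1 - t) * deriv (doubleGF · y) t + (1 - y - 2 * t) * doubleGF t y = 1 := by
  set a : ℕ → ℝ := fun n => genHSum y (n + 1)
  set S := doubleGF t y
  set T := t * deriv (doubleGF · y) t with hT_def
  have hS : HasSum (fun n => a n * t ^ n) S :=
    (summable_mul_pow_of_abs_le (abs_genHSum_succ_le hy) ht).hasSum
  have hT : HasSum (fun n => n * a n * t ^ n) T := by
    have hna : ∀ n : ℕ, |n * a n| ≤ (1 - |y|)⁻¹ * ((n : ℝ) + 1) ^ 2 := fun n => by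
      rw [abs_mul, Nat.abs_cast]
      calc (n : ℝ) * |a n| ≤ (n + 1) * ((1 - |y|)⁻¹ * ((n : ℝ) + 1) ^ 1) := by
            gcongr
            · linarith
            · exact abs_genHSum_succ_le hy n
        _ = (1 - |y|)⁻¹ * ((n : ℝ) + 1) ^ 2 := by ring
    rw [hT_def, (hasDerivAt_doubleGF hy ht).deriv, ← tsum_mul_left]
    convert (summable_mul_pow_of_abs_le hna ht).hasSum using 1
    refine tsum_congr fun n => ?_
    rcases n with _ | n
    · simp
    · rw [Nat.add_sub_cancel, pow_succ]
      ring
  -- `∑ (n + 1) Pₙ tⁿ` computed twice: through the recurrence, and by splitting off `n = 0`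
  have hrec : HasSum (fun n => (n + 1) * genHSum y n * t ^ n) (T + (1 - y) * S) := by
    refine (hT.add (hS.mul_left (1 - y))).congr_fun fun n => ?_
    linear_combination (-t ^ n) * genHSum_succ hy n
  have hshift : HasSum (fun n => (n + 1) * genHSum y n * t ^ n) (t * (T + 2 * S) + 1) := by
    refine (hasSum_nat_add_iff' 1).mp ?_
    rw [Finset.sum_range_one, genHSum_zero, Nat.cast_zero, zero_add, one_mul, pow_zero,
      mul_one, add_sub_cancel_right]
    refine ((hT.add (hS.mul_left 2)).mul_left t).congr_fun fun n => ?_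
    push_cast [a]
    ring
  linear_combination hrec.unique hshift

theorem hasDerivAt_rpow_mul_rpow_mul_doubleGF (hy : |y| < 1) (ht₀ : 0 < t) (ht₁ : t < 1) :
    HasDerivAt (fun u => u ^ (1 - y) * (1 - u) ^ (1 + y) * doubleGF u y)
      (t ^ (-y) * (1 - t) ^ y) t := by
  have ht : |t| < 1 := by rwa [abs_of_pos ht₀]
  have h₁ : HasDerivAt (fun u : ℝ => u ^ (1 - y)) ((1 - y) * t ^ (-y)) t := by
    simpa using Real.hasDerivAt_rpow_const (x := t) (p := 1 - y) (.inl ht₀.ne')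
  have h₂ : HasDerivAt (fun u : ℝ => (1 - u) ^ (1 + y)) (-1 * (1 + y) * (1 - t) ^ y) t := by
    simpa [mul_comm] using ((hasDerivAt_id t).const_sub 1).rpow_const (p := 1 + y)
      (.inl (sub_pos.2 ht₁).ne')
  have hQ := (hasDerivAt_doubleGF hy ht).differentiableAt.hasDerivAt
  refine ((h₁.mul h₂).mul hQ).congr_deriv ?_
  rw [Pi.mul_apply, show 1 - y = -y + 1 by ring, show 1 + y = y + 1 by ring, Real.rpow_add ht₀,
    Real.rpow_add (sub_pos.2 ht₁), Real.rpow_one, Real.rpow_one]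
  linear_combination (t ^ (-y) * (1 - t) ^ y) * doubleGF_ode hy ht

end DoubleGF

theorem integral_rpow_mul_one_sub_rpow_eq {x y : ℝ} (hy : |y| < 1) (hx₀ : 0 < x)
    (hx₁ : x < 1) :
    ∫ t in (0 : ℝ)..x, t ^ (-y) * (1 - t) ^ y =
      x ^ (1 - y) * (1 - x) ^ (1 + y) * doubleGF x y := by
  obtain ⟨hy₁, hy₂⟩ := abs_lt.1 hy
  have hcont_one_sub :
      ∀ t ∈ Set.Icc 0 x, ∀ p : ℝ, ContinuousAt (fun u : ℝ => (1 - u) ^ p) t :=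
    fun t ht p => (continuousAt_const.sub continuousAt_id).rpow_const
      (.inl (sub_pos.2 (ht.2.trans_lt hx₁)).ne')
  have hcont : ContinuousOn (fun u => u ^ (1 - y) * (1 - u) ^ (1 + y) * doubleGF u y)
      (Set.Icc 0 x) := fun t ht =>
    have ht' : |t| < 1 := abs_lt.2 ⟨by linarith [ht.1], by linarith [ht.2]⟩
    (((Real.continuousAt_rpow_const _ _ (.inr (by linarith))).mul (hcont_one_sub t ht _)).mul
      (hasDerivAt_doubleGF hy ht').continuousAt).continuousWithinAt
  have hint : IntervalIntegrable (fun t : ℝ => t ^ (-y) * (1 - t) ^ y) MeasureTheory.volume 0 x :=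
    (intervalIntegral.intervalIntegrable_rpow' (by linarith)).mul_continuousOn fun t ht =>
      (hcont_one_sub t (by rwa [Set.uIcc_of_le hx₀.le] at ht) y).continuousWithinAt
  rw [intervalIntegral.integral_eq_sub_of_hasDerivAt_of_le hx₀.le hcont
    (fun t ht => hasDerivAt_rpow_mul_rpow_mul_doubleGF hy ht.1 (ht.2.trans hx₁)) hint,
    Real.zero_rpow (by linarith), zero_mul, zero_mul, sub_zero]

theorem summable_pow_mul_pow_mul_genH {x y : ℝ} (hx : |x| < 1) (hy : |y| < 1) :
    Summable (fun p : ℕ × ℕ => y ^ p.1 * (x ^ p.2 * genH p.1 (p.2 + 1))) := by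
  refine .of_norm_bounded ((summable_geometric_of_lt_one (abs_nonneg y) hy).mul_of_nonneg
    (summable_succ_pow_mul_geometric 1 (r := |x|) (by rwa [abs_abs])) (fun _ => by positivity)
    (fun _ => by positivity)) fun ⟨j, i⟩ => ?_
  rw [norm_mul, norm_mul, norm_pow, norm_pow, Real.norm_eq_abs, Real.norm_eq_abs,
    Real.norm_of_nonneg (genH_nonneg j (i + 1)), pow_one, mul_comm (|x| ^ i)]
  have := genH_le_self j (Nat.le_add_left 1 i)
  push_cast at this
  gcongr

theorem hasSum_pow_mul_tsum_genH {x y : ℝ} (hx : |x| < 1) (hy : |y| < 1) :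
    HasSum (fun j => y ^ j * ∑' i, x ^ i * genH j (i + 1)) (doubleGF x y) := by
  have h := summable_pow_mul_pow_mul_genH hx hy
  have hfib := h.hasSum.prod_fiberwise fun j => (h.prod_factor j).hasSum
  simp only [tsum_mul_left] at hfib
  convert hfib using 1
  rw [h.tsum_prod, ← h.tsum_comm, doubleGF]
  refine tsum_congr fun i => ?_
  rw [genHSum, ← tsum_mul_right]
  exact tsum_congr fun j => by ring

/-- For every `x ∈ (0,1)` and `y ∈ (−1,1)`, the double generating function
`Q(x,y) = ∑_{j=0}^{∞} y^j f_j(x)` (where `f_j(x) = ∑_{i=0}^{∞} x^i H_{i+1}^{(j)}`)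
converges and equals `B(x, 1−y, 1+y)/(x^{1−y} (1−x)^{1+y})`, where
`B(x,a,b) = ∫_0^x t^{a−1}(1−t)^{b−1} dt` is the incomplete beta function. -/
theorem stmt14 (x y : ℝ) (hx : x ∈ Set.Ioo (0 : ℝ) 1) (hy : y ∈ Set.Ioo (-1 : ℝ) 1) :
    Summable (fun j : ℕ => y ^ j * ∑' i : ℕ, x ^ i * genH j (i + 1)) ∧
    (∑' j : ℕ, y ^ j * ∑' i : ℕ, x ^ i * genH j (i + 1))
      = (∫ t in (0 : ℝ)..x, t ^ (1 - y - 1) * (1 - t) ^ (1 + y - 1))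
        / (x ^ (1 - y) * (1 - x) ^ (1 + y)) := by
  obtain ⟨hx₀, hx₁⟩ := hx
  have hx' : |x| < 1 := by rwa [abs_of_pos hx₀]
  have hy' : |y| < 1 := abs_lt.2 hy
  have hQ := hasSum_pow_mul_tsum_genH hx' hy'
  refine ⟨hQ.summable, ?_⟩
  rw [hQ.tsum_eq, show 1 - y - 1 = -y by ring, show 1 + y - 1 = y by ring,
    integral_rpow_mul_one_sub_rpow_eq hy' hx₀ hx₁, mul_div_cancel_left₀]
  have := sub_pos.2 hx₁
  positivity
end

section
/- For every integer l ≥ 1, π^{2l} = (−1)^{l+1} · ((2l)! / ((2^{2l−1} − 1) · B_{2l})) · ∑_{n=1}^{∞} H_n^{(2l−1)} / (n · 2^n), where B_{2l} is the 2l-th Bernoulli number and H_n^{(k)} are the generalized harmonic numbers. -/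
open Finset Nat Real

lemma choose_succ_succ_div_succ (j m : ℕ) :
    ((j + 1).choose (m + 1) : ℝ) / (j + 1) = (j.choose m : ℝ) / (m + 1) := by
  rw [div_eq_div_iff (by positivity) (by positivity)]
  exact_mod_cast (j.add_one_mul_choose_eq m).symm.trans (mul_comm _ _)

lemma sum_range_alternating_choose_succ (n : ℕ) :
    ∑ m ∈ range (n + 1), (-1 : ℝ) ^ m * (n + 1).choose (m + 1) = 1 := by
  have h := Int.alternating_sum_range_choose_of_ne (n := n + 1) (by omega)
  rw [sum_range_succ'] at h
  simp only [pow_succ, mul_neg_one, neg_mul, sum_neg_distrib, pow_zero, choose_zero_right,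
    Nat.cast_one, mul_one] at h
  exact_mod_cast neg_add_eq_zero.mp h

lemma genH_succ_eq_sum_choose (k n : ℕ) :
    genH k (n + 1) = ∑ m ∈ range (n + 1), (-1 : ℝ) ^ m * (n + 1).choose (m + 1) / (m + 1) ^ k := by
  induction k generalizing n with
  | zero => simpa [genH] using (sum_range_alternating_choose_succ n).symm
  | succ k ih =>
    calc genH (k + 1) (n + 1) = ∑ j ∈ range (n + 1), genH k (j + 1) / (j + 1) := by
          rw [genH, ← Ico_add_one_right_eq_Icc, sum_Ico_eq_sum_range]
          simp [add_comm]
      _ = ∑ j ∈ range (n + 1), ∑ m ∈ range (j + 1),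
            (-1 : ℝ) ^ m / (m + 1) ^ (k + 1) * j.choose m := by
          refine sum_congr rfl fun j _ => ?_
          rw [ih, sum_div]
          refine sum_congr rfl fun m _ => ?_
          rw [mul_div_right_comm, mul_div_assoc, choose_succ_succ_div_succ]
          field_simp
          ring
      _ = ∑ m ∈ range (n + 1), ∑ j ∈ Icc m n,
            (-1 : ℝ) ^ m / (m + 1) ^ (k + 1) * j.choose m :=
          sum_comm' fun j m => by simp only [mem_range, mem_Icc]; omega
      _ = _ := by
          refine sum_congr rfl fun m _ => ?_
          rw [← mul_sum, ← Nat.cast_sum, sum_Icc_choose]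
          ring

lemma hasSum_choose_div_two_pow_succ (m : ℕ) :
    HasSum (fun n : ℕ => (n.choose m : ℝ) / 2 ^ (n + 1)) 1 := by
  have h := (hasSum_choose_mul_geometric_of_norm_lt_one m
    (r := (1 / 2 : ℝ)) (by norm_num)).div_const (2 ^ (m + 1))
  refine (hasSum_nat_add_iff' m).mp ?_
  rw [sum_eq_zero fun i hi => by simp [choose_eq_zero_of_lt (mem_range.mp hi)], sub_zero]
  convert! h using 2 with n
  · rw [one_div_pow]
    field_simp
    ring
  · norm_num [← inv_pow]

lemma hasSum_choose_succ_div_succ_mul_two_pow (m : ℕ) :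
    HasSum (fun n : ℕ => ((n + 1).choose (m + 1) : ℝ) / ((n + 1) * 2 ^ (n + 1))) (1 / (m + 1)) := by
  convert! (hasSum_choose_div_two_pow_succ m).div_const ((m : ℝ) + 1) using 2 with n
  rw [← div_div, choose_succ_succ_div_succ, div_right_comm]

lemma tsum_genH_div_eq_tsum_alternating {k : ℕ} (hk : k ≠ 0) :
    ∑' n : ℕ, genH k (n + 1) / ((n + 1) * 2 ^ (n + 1))
      = ∑' m : ℕ, (-1 : ℝ) ^ m / (m + 1) ^ (k + 1) := by
  set g : ℕ → ℕ → ℝ := fun m n =>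
    ((n + 1).choose (m + 1) : ℝ) / ((n + 1) * 2 ^ (n + 1)) / (m + 1) ^ k with hg
  have hg_nonneg : ∀ m n, 0 ≤ g m n := fun m n => by positivity
  have hg_row : ∀ m, HasSum (g m) (1 / (m + 1) ^ (k + 1)) := fun m => by
    convert! (hasSum_choose_succ_div_succ_mul_two_pow m).div_const (((m : ℝ) + 1) ^ k) using 1
    rw [pow_succ, div_div, mul_comm]
  have hsummable : Summable (Function.uncurry fun m n => (-1 : ℝ) ^ m * g m n) := by
    refine Summable.of_norm ?_
    simp only [Function.uncurry, norm_mul, norm_pow, norm_neg, norm_one, one_pow, one_mul,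
      Real.norm_of_nonneg (hg_nonneg _ _)]
    refine (summable_prod_of_nonneg fun p => hg_nonneg p.1 p.2).mpr
      ⟨fun m => (hg_row m).summable, ?_⟩
    simp only [fun m => (hg_row m).tsum_eq]
    exact_mod_cast (summable_nat_add_iff 1).mpr
      (Real.summable_one_div_nat_pow.mpr (by omega : 1 < k + 1))
  have hcol : ∀ n, genH k (n + 1) / ((n + 1) * 2 ^ (n + 1)) = ∑' m, (-1 : ℝ) ^ m * g m n := by
    intro n
    rw [tsum_eq_sum (s := range (n + 1)) fun m hm => by
      simp [hg, choose_eq_zero_of_lt (by rw [mem_range] at hm; omega : n + 1 < m + 1)],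
      genH_succ_eq_sum_choose, sum_div]
    refine sum_congr rfl fun m _ => ?_
    simp only [hg]
    field_simp
  calc ∑' n : ℕ, genH k (n + 1) / ((n + 1) * 2 ^ (n + 1))
      = ∑' (n : ℕ) (m : ℕ), (-1 : ℝ) ^ m * g m n := tsum_congr hcol
    _ = ∑' (m : ℕ) (n : ℕ), (-1 : ℝ) ^ m * g m n := hsummable.tsum_comm
    _ = _ := tsum_congr fun m => by
      rw [tsum_mul_left, (hg_row m).tsum_eq, mul_one_div]

lemma hasSum_alternating_one_div_succ_pow {s : ℕ} {z : ℝ}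
    (h : HasSum (fun n : ℕ => 1 / ((n : ℝ) + 1) ^ s) z) :
    HasSum (fun n : ℕ => (-1 : ℝ) ^ n / (n + 1) ^ s) ((1 - 2 / 2 ^ s) * z) := by
  have hodd : HasSum (fun k : ℕ => 1 / (((2 * k + 1 : ℕ) : ℝ) + 1) ^ s) (z / 2 ^ s) := by
    convert! h.div_const (2 ^ s) using 2 with k
    push_cast
    rw [show (2 * k + 1 + 1 : ℝ) = 2 * (k + 1) by ring, mul_pow]
    field_simp
  have heven : HasSum (fun k : ℕ => 1 / (((2 * k : ℕ) : ℝ) + 1) ^ s) (z - z / 2 ^ s) := by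
    obtain ⟨e, he⟩ := h.summable.comp_injective (mul_right_injective₀ two_ne_zero)
    have hsplit : e + z / 2 ^ s = z :=
      (HasSum.even_add_odd (f := fun n : ℕ => 1 / ((n : ℝ) + 1) ^ s) he hodd).unique h
    rwa [show z - z / 2 ^ s = e by linarith]
  have hsum := HasSum.even_add_odd (f := fun n : ℕ => (-1 : ℝ) ^ n / ((n : ℝ) + 1) ^ s)
    (heven.congr_fun fun k => by simp [pow_mul])
    (hodd.neg.congr_fun fun k => by simp [pow_succ, pow_mul, neg_div])
  convert hsum using 1
  ring

lemma hasSum_one_div_succ_pow_two_mul {l : ℕ} (hl : l ≠ 0) :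
    HasSum (fun n : ℕ => 1 / ((n : ℝ) + 1) ^ (2 * l))
      ((-1 : ℝ) ^ (l + 1) * 2 ^ (2 * l - 1) * π ^ (2 * l) * bernoulli (2 * l) / (2 * l)!) := by
  simpa [hl] using (hasSum_nat_add_iff' 1).mpr (hasSum_zeta_nat hl)

lemma bernoulli_two_mul_ne_zero {l : ℕ} (hl : l ≠ 0) : bernoulli (2 * l) ≠ 0 := by
  intro h
  have := le_hasSum (hasSum_one_div_succ_pow_two_mul hl) 0 fun _ _ => by positivity
  norm_num [h] at this

/-- For every integer `l ≥ 1`,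
`π^{2l} = (−1)^{l+1} ((2l)!/((2^{2l−1} − 1) B_{2l})) ∑_{n=1}^{∞} H_n^{(2l−1)}/(n·2^n)`,
where `B_{2l}` is the `2l`-th Bernoulli number. -/
theorem stmt18 (l : ℕ) (hl : 1 ≤ l) :
    Real.pi ^ (2 * l)
      = (-1 : ℝ) ^ (l + 1)
        * (((2 * l).factorial : ℝ) / ((2 ^ (2 * l - 1) - 1) * (bernoulli (2 * l) : ℝ)))
        * ∑' n : ℕ, genH (2 * l - 1) (n + 1) / (((n : ℝ) + 1) * 2 ^ (n + 1)) := by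
  have hl0 : l ≠ 0 := by omega
  have hB : (bernoulli (2 * l) : ℝ) ≠ 0 := by exact_mod_cast bernoulli_two_mul_ne_zero hl0
  have hpow : (2 : ℝ) ^ (2 * l) = 2 * 2 ^ (2 * l - 1) := by
    rw [← pow_succ' (2 : ℝ), Nat.sub_add_cancel (by omega)]
  have hc : (2 : ℝ) ^ (2 * l - 1) - 1 ≠ 0 := by
    have : (2 : ℝ) ≤ 2 ^ (2 * l - 1) := le_self_pow₀ one_le_two (by omega)
    linarith
  rw [tsum_genH_div_eq_tsum_alternating (by omega), Nat.sub_add_cancel (by omega),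
    (hasSum_alternating_one_div_succ_pow (hasSum_one_div_succ_pow_two_mul hl0)).tsum_eq, hpow]
  field_simp
  rw [← pow_mul, mul_comm, pow_mul, neg_one_sq, one_pow]
end
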